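/- For any a, b ∈ ℚ_p with a ≠ 0, the translation-dilation ψ^{a,b}(x) = |a|_p^{−1/2} ψ((x−b)/a) of the wavelet ψ(x) = χ(p^{−1}x)𝟙_{ℤ_p}(x) equals a complex number of modulus 1 (a root of unity of order dividing p^N for some N) times a wavelet ψ_{γ,n,j} from the discrete wavelet basis, with γ = log_p |a|_p, n = {|a|_p b} (the fractional part of |a|_p·b), and j ≡ (a|a|_p)^{−1} mod p. -/

import Mathlib

open scoped Classical
open MeasureTheory

noncomputable instance (p : ℕ) [Fact p.Prime] : MeasurableSpace ℚ_[p] := borel _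

/-- The unit part of a nonzero `p`-adic number: `x * p^(-v_p(x))`, a `p`-adic unit. -/
noncomputable def padicUnitPart (p : ℕ) [Fact p.Prime] (x : ℚ_[p]) : ℤ_[p] :=
  if hx : x = 0 then 0
  else ⟨x * (p : ℚ_[p]) ^ (-x.valuation), by
    have hp : (1 : ℝ) < p := Nat.one_lt_cast.mpr (Fact.out (p := p.Prime)).one_lt
    rw [norm_mul, Padic.norm_eq_zpow_neg_valuation hx, Padic.norm_p_zpow, neg_neg,
      ← zpow_add₀ (by positivity : (p : ℝ) ≠ 0)]
    simp⟩

/-- The `i`-th digit of the `p`-adic expansion `x = ∑ x_i p^i`. -/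
noncomputable def padicDigit (p : ℕ) [Fact p.Prime] (x : ℚ_[p]) (i : ℤ) : ℕ :=
  if x = 0 then 0
  else if x.valuation ≤ i then
    ((padicUnitPart p x).appr ((i - x.valuation).toNat + 1)
      - (padicUnitPart p x).appr (i - x.valuation).toNat) / p ^ (i - x.valuation).toNat
  else 0

/-- The `p`-adic fractional part `{x}_p = ∑_{i<0} x_i p^i`, a rational number. -/
noncomputable def padicFract (p : ℕ) [Fact p.Prime] (x : ℚ_[p]) : ℚ :=
  ∑ i ∈ Finset.Ico x.valuation 0, (padicDigit p x i : ℚ) * (p : ℚ) ^ i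

/-- `x` is the canonical representative of its coset in `ℚ_p/ℤ_p`. -/
def IsPadicRep (p : ℕ) [Fact p.Prime] (n : ℚ_[p]) : Prop :=
  ((padicFract p n : ℚ) : ℚ_[p]) = n

/-- The standard additive character `χ(x) = exp(2πi {x}_p)` on `ℚ_p`. -/
noncomputable def padicChar (p : ℕ) [Fact p.Prime] (x : ℚ_[p]) : ℂ :=
  Complex.exp (2 * Real.pi * Complex.I * ((padicFract p x : ℚ) : ℂ))

/-- The Monna map `ρ : ℚ_p → [0,∞)`, `∑ x_i p^i ↦ ∑ x_i p^(-i-1)`. -/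
noncomputable def monna (p : ℕ) [Fact p.Prime] (x : ℚ_[p]) : ℝ :=
  ∑' i : ℤ, (padicDigit p x i : ℝ) * (p : ℝ) ^ (-i - 1)

/-- The basic `p`-adic wavelet `ψ(x) = χ(p⁻¹ x) Ω(|x|_p)`. -/
noncomputable def padicPsi (p : ℕ) [Fact p.Prime] (x : ℚ_[p]) : ℂ :=
  if ‖x‖ ≤ 1 then padicChar p ((p : ℚ_[p])⁻¹ * x) else 0

/-- The `p`-adic wavelet `ψ_{γ,n,j}`. -/
noncomputable def padicWavelet (p : ℕ) [Fact p.Prime] (γ : ℤ) (n : ℚ_[p]) (j : ℕ)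
    (x : ℚ_[p]) : ℂ :=
  if ‖(p : ℚ_[p]) ^ γ * x - n‖ ≤ 1 then
    (((p : ℝ) ^ (-(γ : ℝ) / 2) : ℝ) : ℂ) *
      padicChar p ((p : ℚ_[p]) ^ (γ - 1) * (j : ℚ_[p]) * (x - (p : ℚ_[p]) ^ (-γ) * n))
  else 0

/-- Translation-dilation `ψ^{a,b}(x) = |a|_p^{-1/2} ψ((x-b)/a)` of the wavelet `ψ`. -/
noncomputable def padicPsiTransDil (p : ℕ) [Fact p.Prime] (a b : ℚ_[p]) (x : ℚ_[p]) : ℂ :=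
  ((‖a‖ ^ (-(1 : ℝ) / 2) : ℝ) : ℂ) * padicPsi p ((x - b) / a)

/-!
Write `γ = -v_p(a)`, `n = {p^γ b}`, and pick `j` with `a p^γ j ≡ 1 mod p`. On the support
`|x - b|_p ≤ |a|_p` the argument `p⁻¹ (x - b) / a` of `χ` differs from `p^(γ-1) j (x - b)` by an
element of `ℤ_p`, on which `χ` is trivial. Splitting `x - b = (x - p^(-γ) n) + (p^(-γ) n - b)` and
using that `χ` is additive pulls out the constant `c = χ(p^(γ-1) j (p^(-γ) n - b))`, a `p`-power
root of unity. The supports of both sides agree because `p^γ b - n ∈ ℤ_p`. Additivity of `χ` holds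
because `{x + y} - {x} - {y}` is a rational number in `ℤ_p` with `p`-power denominator, hence an
integer.
-/

lemma IsUltrametricDist.norm_le_iff_of_norm_sub_le {E : Type*} [SeminormedAddGroup E]
    [IsUltrametricDist E] {x y : E} {r : ℝ} (h : ‖x - y‖ ≤ r) : ‖x‖ ≤ r ↔ ‖y‖ ≤ r := by
  constructor <;> intro hr
  · simpa using (norm_add_le_max (-(x - y)) x).trans (max_le (by rwa [norm_neg]) hr)
  · simpa using (norm_add_le_max (x - y) y).trans (max_le h hr)

namespace Padic

variable {p : ℕ} [Fact p.Prime]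

lemma exists_eq_intCast_of_mul_pow_eq_intCast {r : ℚ} {N : ℕ}
    {z : ℤ} (hz : r * p ^ N = z) (hr : ‖(r : ℚ_[p])‖ ≤ 1) : ∃ m : ℤ, r = m := by
  have hp : (p : ℚ) ^ N ≠ 0 := pow_ne_zero _ (Nat.cast_ne_zero.mpr (Fact.out : p.Prime).ne_zero)
  have hzn : ‖(z : ℚ_[p])‖ ≤ (p : ℝ) ^ (-(N : ℤ)) := by
    have : (z : ℚ_[p]) = (r : ℚ_[p]) * (p : ℚ_[p]) ^ (N : ℤ) := by
      rw [zpow_natCast]; exact_mod_cast hz.symm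
    rw [this, norm_mul, norm_p_zpow]
    exact mul_le_of_le_one_left (by positivity) hr
  obtain ⟨m, rfl⟩ := (norm_int_le_pow_iff_dvd z N).mp hzn
  refine ⟨m, mul_right_cancel₀ hp ?_⟩
  rw [hz]; push_cast; ring

lemma exists_nat_norm_mul_sub_one_le {u : ℚ_[p]} (hu : ‖u‖ = 1) :
    ∃ j : ℕ, 1 ≤ j ∧ j ≤ p - 1 ∧ ‖u * j - 1‖ ≤ (p : ℝ)⁻¹ := by
  have hu0 : u ≠ 0 := norm_ne_zero_iff.mp (by rw [hu]; exact one_ne_zero)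
  let w : ℤ_[p] := ⟨u⁻¹, by rw [norm_inv, hu, inv_one]⟩
  have hw : ‖w‖ = 1 := by rw [PadicInt.norm_def, norm_inv, hu, inv_one]
  refine ⟨w.zmodRepr, ?_, ?_, ?_⟩
  · have := (PadicInt.norm_natCast_zmodRepr_eq_one_iff_ne w).mp
      (PadicInt.norm_natCast_zmodRepr_eq_one_iff.mpr hw)
    omega
  · have := w.zmodRepr_lt_p
    omega
  · have hlt : ‖(w.zmodRepr : ℚ_[p]) - u⁻¹‖ < (p : ℝ) ^ ((-1 : ℤ) + 1) := by
      have := w.norm_sub_zmodRepr_lt_one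
      rw [PadicInt.norm_def, PadicInt.coe_sub, PadicInt.coe_natCast] at this
      rwa [neg_add_cancel, zpow_zero, norm_sub_rev]
    have hle := (norm_le_pow_iff_norm_lt_pow_add_one _ _).mpr hlt
    rw [zpow_neg_one] at hle
    rwa [show u * w.zmodRepr - 1 = u * ((w.zmodRepr : ℚ_[p]) - u⁻¹) by field_simp, norm_mul, hu,
      one_mul]

lemma norm_mul_zpow_neg_valuation {a : ℚ_[p]} (ha : a ≠ 0) :
    ‖a * (p : ℚ_[p]) ^ (-a.valuation)‖ = 1 := by
  have hp : (p : ℝ) ≠ 0 := Nat.cast_ne_zero.mpr (Fact.out : p.Prime).ne_zero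
  rw [norm_mul, norm_eq_zpow_neg_valuation ha, norm_p_zpow, neg_neg, ← zpow_add₀ hp,
    neg_add_cancel, zpow_zero]

lemma norm_div_eq_norm_zpow_neg_valuation_mul {a : ℚ_[p]} (ha : a ≠ 0) (y : ℚ_[p]) :
    ‖y / a‖ = ‖(p : ℚ_[p]) ^ (-a.valuation) * y‖ := by
  have hp : (p : ℚ_[p]) ^ (-a.valuation) ≠ 0 :=
    zpow_ne_zero _ (Nat.cast_ne_zero.mpr (Fact.out : p.Prime).ne_zero)
  rw [← mul_div_mul_left y a hp, norm_div, mul_comm _ a, norm_mul_zpow_neg_valuation ha, div_one]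

lemma norm_rpow_eq_rpow_neg_valuation {a : ℚ_[p]} (ha : a ≠ 0) (s : ℝ) :
    ‖a‖ ^ s = (p : ℝ) ^ (-(a.valuation : ℝ) * s) := by
  rw [norm_eq_zpow_neg_valuation ha, ← Real.rpow_intCast, ← Real.rpow_mul (Nat.cast_nonneg p),
    Int.cast_neg]

end Padic

namespace PadicInt

variable {p : ℕ} [Fact p.Prime]

lemma sum_range_appr_digits_mul_pow (u : ℤ_[p]) (m : ℕ) :
    ∑ k ∈ Finset.range m, (u.appr (k + 1) - u.appr k) / p ^ k * p ^ k = u.appr m := by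
  have hdiv (k : ℕ) : (u.appr (k + 1) - u.appr k) / p ^ k * p ^ k = u.appr (k + 1) - u.appr k :=
    Nat.div_mul_cancel (dvd_appr_sub_appr u k (k + 1) k.le_succ)
  simp only [hdiv, Finset.sum_range_tsub (appr_mono u)]
  simp [appr]

end PadicInt

section PadicFract

variable {p : ℕ} [Fact p.Prime]

lemma coe_padicUnitPart {x : ℚ_[p]} (hx : x ≠ 0) :
    (padicUnitPart p x : ℚ_[p]) = x * (p : ℚ_[p]) ^ (-x.valuation) := by
  simp [padicUnitPart, hx]

lemma padicFract_eq_zero_of_norm_le_one {x : ℚ_[p]} (hx : ‖x‖ ≤ 1) : padicFract p x = 0 := by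
  have hv : 0 ≤ x.valuation := (Padic.norm_le_one_iff_val_nonneg x).mp hx
  simp [padicFract, Finset.Ico_eq_empty_of_le hv]

lemma padicFract_eq_zpow_mul_appr {x : ℚ_[p]} (hx : x ≠ 0) :
    padicFract p x =
      (p : ℚ) ^ x.valuation * (padicUnitPart p x).appr (-x.valuation).toNat := by
  have hp : (p : ℚ) ≠ 0 := Nat.cast_ne_zero.mpr (Fact.out : p.Prime).ne_zero
  rw [padicFract, Int.Ico_eq_finset_map, Finset.sum_map, zero_sub,
    ← PadicInt.sum_range_appr_digits_mul_pow, Nat.cast_sum, Finset.mul_sum]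
  refine Finset.sum_congr rfl fun k _ => ?_
  have hk : (x.valuation + k - x.valuation).toNat = k := by omega
  simp only [Function.Embedding.trans_apply, Nat.castEmbedding_apply, addLeftEmbedding_apply,
    padicDigit, if_neg hx, if_pos (le_add_of_nonneg_right (Int.natCast_nonneg k)), hk,
    zpow_add₀ hp, zpow_natCast, Nat.cast_mul, Nat.cast_pow]
  ring

lemma norm_sub_padicFract_le_one (x : ℚ_[p]) : ‖x - (padicFract p x : ℚ_[p])‖ ≤ 1 := by
  rcases eq_or_ne x 0 with rfl | hx
  · simp [padicFract_eq_zero_of_norm_le_one]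
  set v := x.valuation
  set m := (-v).toNat
  set u := padicUnitPart p x
  have hp : (p : ℚ_[p]) ≠ 0 := Nat.cast_ne_zero.mpr (Fact.out : p.Prime).ne_zero
  have hx_eq : x = (u : ℚ_[p]) * (p : ℚ_[p]) ^ v := by
    rw [coe_padicUnitPart hx, mul_assoc, ← zpow_add₀ hp, neg_add_cancel, zpow_zero, mul_one]
  have hdiff :
      x - (padicFract p x : ℚ_[p]) = (p : ℚ_[p]) ^ v * ((u - u.appr m : ℤ_[p]) : ℚ_[p]) := by
    rw [padicFract_eq_zpow_mul_appr hx]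
    nth_rw 1 [hx_eq]
    push_cast
    ring
  have happr : ‖u - u.appr m‖ ≤ (p : ℝ) ^ (-(m : ℤ)) :=
    (PadicInt.norm_le_pow_iff_mem_span_pow _ m).mpr (PadicInt.appr_spec m u)
  rw [hdiff, norm_mul, Padic.norm_p_zpow, ← PadicInt.norm_def]
  have hp0 : (0 : ℝ) < p := Nat.cast_pos.mpr (Fact.out : p.Prime).pos
  calc (p : ℝ) ^ (-v) * ‖u - u.appr m‖ ≤ (p : ℝ) ^ (-v) * (p : ℝ) ^ (-(m : ℤ)) := by gcongr
    _ = (p : ℝ) ^ (-v - m) := by rw [← zpow_add₀ hp0.ne']; ring_nf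
    _ ≤ 1 := zpow_le_one_of_nonpos₀ (by exact_mod_cast (Fact.out : p.Prime).one_le) (by omega)

lemma exists_padicFract_mul_pow_eq_intCast (x : ℚ_[p]) {N : ℕ} (hN : -x.valuation ≤ N) :
    ∃ z : ℤ, padicFract p x * p ^ N = z := by
  rcases eq_or_ne x 0 with rfl | hx
  · exact ⟨0, by simp [padicFract_eq_zero_of_norm_le_one]⟩
  have hp : (p : ℚ) ≠ 0 := Nat.cast_ne_zero.mpr (Fact.out : p.Prime).ne_zero
  obtain ⟨k, hk⟩ := Int.eq_ofNat_of_zero_le (by omega : 0 ≤ x.valuation + N)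
  refine ⟨p ^ k * (padicUnitPart p x).appr (-x.valuation).toNat, ?_⟩
  rw [padicFract_eq_zpow_mul_appr hx, mul_right_comm, ← zpow_natCast, ← zpow_add₀ hp, hk,
    zpow_natCast]
  push_cast
  ring

lemma exists_padicFract_add_eq (x y : ℚ_[p]) :
    ∃ m : ℤ, padicFract p (x + y) = padicFract p x + padicFract p y + m := by
  set N := max (max (-(x + y).valuation).toNat (-x.valuation).toNat) (-y.valuation).toNat
  obtain ⟨z, hz⟩ := exists_padicFract_mul_pow_eq_intCast (x + y) (N := N) (by omega)
  obtain ⟨zx, hzx⟩ := exists_padicFract_mul_pow_eq_intCast x (N := N) (by omega)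
  obtain ⟨zy, hzy⟩ := exists_padicFract_mul_pow_eq_intCast y (N := N) (by omega)
  have hint : (padicFract p (x + y) - padicFract p x - padicFract p y) * p ^ N =
      ((z - zx - zy : ℤ) : ℚ) := by
    push_cast; rw [← hz, ← hzx, ← hzy]; ring
  have hnorm : ‖((padicFract p (x + y) - padicFract p x - padicFract p y : ℚ) : ℚ_[p])‖ ≤ 1 := by
    have hsplit : ((padicFract p (x + y) - padicFract p x - padicFract p y : ℚ) : ℚ_[p]) =
        (x - padicFract p x) + (y - padicFract p y) + -(x + y - padicFract p (x + y)) := by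
      push_cast; ring
    rw [hsplit]
    refine (IsUltrametricDist.norm_add_le_max _ _).trans (max_le ?_ ?_)
    · exact (IsUltrametricDist.norm_add_le_max _ _).trans
        (max_le (norm_sub_padicFract_le_one x) (norm_sub_padicFract_le_one y))
    · rw [norm_neg]; exact norm_sub_padicFract_le_one _
  obtain ⟨m, hm⟩ := Padic.exists_eq_intCast_of_mul_pow_eq_intCast hint hnorm
  exact ⟨m, by rw [← hm]; ring⟩

end PadicFract

section PadicChar

variable {p : ℕ} [Fact p.Prime]

lemma padicChar_eq_one_of_norm_le_one {x : ℚ_[p]} (hx : ‖x‖ ≤ 1) : padicChar p x = 1 := by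
  simp [padicChar, padicFract_eq_zero_of_norm_le_one hx]

lemma padicChar_add (x y : ℚ_[p]) : padicChar p (x + y) = padicChar p x * padicChar p y := by
  obtain ⟨m, hm⟩ := exists_padicFract_add_eq x y
  rw [padicChar, hm, Rat.cast_add, Rat.cast_add, Rat.cast_intCast, mul_add, mul_add,
    Complex.exp_add, Complex.exp_add, mul_comm _ (m : ℂ), Complex.exp_int_mul_two_pi_mul_I,
    mul_one, padicChar, padicChar]

lemma padicChar_eq_of_norm_sub_le_one {x y : ℚ_[p]} (h : ‖x - y‖ ≤ 1) :
    padicChar p x = padicChar p y := by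
  rw [← sub_add_cancel x y, padicChar_add, padicChar_eq_one_of_norm_le_one h, one_mul]

lemma norm_padicChar (x : ℚ_[p]) : ‖padicChar p x‖ = 1 := by
  rw [padicChar, show 2 * Real.pi * Complex.I * ((padicFract p x : ℚ) : ℂ) =
    ((2 * Real.pi * padicFract p x : ℝ) : ℂ) * Complex.I by push_cast; ring]
  exact Complex.norm_exp_ofReal_mul_I _

lemma exists_padicChar_pow_eq_one (x : ℚ_[p]) : ∃ N : ℕ, padicChar p x ^ p ^ N = 1 := by
  obtain ⟨z, hz⟩ := exists_padicFract_mul_pow_eq_intCast x (N := (-x.valuation).toNat) (by omega)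
  refine ⟨(-x.valuation).toNat, ?_⟩
  have hz' : (z : ℂ) = ((padicFract p x : ℚ) : ℂ) * (p : ℂ) ^ (-x.valuation).toNat := by
    exact_mod_cast hz.symm
  rw [padicChar, ← Complex.exp_nat_mul, ← Complex.exp_int_mul_two_pi_mul_I z, hz']
  push_cast
  ring_nf

lemma padicChar_inv_mul_div_eq {a y : ℚ_[p]} (ha : a ≠ 0) {j : ℕ}
    (hj : ‖a * (p : ℚ_[p]) ^ (-a.valuation) * j - 1‖ ≤ (p : ℝ)⁻¹) (hy : ‖y / a‖ ≤ 1) :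
    padicChar p ((p : ℚ_[p])⁻¹ * (y / a)) =
      padicChar p ((p : ℚ_[p]) ^ (-a.valuation - 1) * j * y) := by
  have hp : (p : ℚ_[p]) ≠ 0 := Nat.cast_ne_zero.mpr (Fact.out : p.Prime).ne_zero
  apply padicChar_eq_of_norm_sub_le_one
  have hdiff : (p : ℚ_[p])⁻¹ * (y / a) - (p : ℚ_[p]) ^ (-a.valuation - 1) * j * y =
      -((p : ℚ_[p])⁻¹ * (y / a) * (a * (p : ℚ_[p]) ^ (-a.valuation) * j - 1)) := by
    rw [zpow_sub_one₀ hp]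
    field_simp
    ring
  rw [hdiff, norm_neg, norm_mul, norm_mul, norm_inv, Padic.norm_p, inv_inv]
  have hp0 : (0 : ℝ) < p := Nat.cast_pos.mpr (Fact.out : p.Prime).pos
  calc (p : ℝ) * ‖y / a‖ * ‖a * (p : ℚ_[p]) ^ (-a.valuation) * j - 1‖
      ≤ p * 1 * (p : ℝ)⁻¹ := by gcongr
    _ = 1 := by field_simp

end PadicChar

/-- any translation-dilation `ψ^{a,b}` of the wavelet `ψ` equals a complex
number `c` of modulus one, a root of unity of order dividing `p^N` for some `N`, times the
discrete wavelet `ψ_{γ,n,j}` with `γ = log_p |a|_p = -v_p(a)`, `n = {|a|_p b}` and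
`j ≡ (a|a|_p)⁻¹ mod p`. -/
theorem transDil_eq_root_of_unity_mul_wavelet (p : ℕ) [Fact p.Prime] (a b : ℚ_[p])
    (ha : a ≠ 0) :
    ∃ (j : ℕ) (c : ℂ), 1 ≤ j ∧ j ≤ p - 1 ∧
      ‖a * (p : ℚ_[p]) ^ (-a.valuation) * (j : ℚ_[p]) - 1‖ ≤ (p : ℝ)⁻¹ ∧
      ‖c‖ = 1 ∧ (∃ N : ℕ, c ^ p ^ N = 1) ∧
      ∀ x, padicPsiTransDil p a b x =
        c * padicWavelet p (-a.valuation)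
          ((padicFract p ((p : ℚ_[p]) ^ (-a.valuation) * b) : ℚ) : ℚ_[p]) j x := by
  set n : ℚ_[p] := (padicFract p ((p : ℚ_[p]) ^ (-a.valuation) * b) : ℚ_[p])
  obtain ⟨j, hj1, hjp, hj⟩ :=
    Padic.exists_nat_norm_mul_sub_one_le (Padic.norm_mul_zpow_neg_valuation ha)
  set c :=
    padicChar p ((p : ℚ_[p]) ^ (-a.valuation - 1) * j * ((p : ℚ_[p]) ^ a.valuation * n - b))
  refine ⟨j, c, hj1, hjp, hj, norm_padicChar _, exists_padicChar_pow_eq_one _, fun x => ?_⟩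
  have hsupp : ‖(x - b) / a‖ ≤ 1 ↔ ‖(p : ℚ_[p]) ^ (-a.valuation) * x - n‖ ≤ 1 := by
    rw [Padic.norm_div_eq_norm_zpow_neg_valuation_mul ha, mul_sub]
    refine IsUltrametricDist.norm_le_iff_of_norm_sub_le ?_
    rw [sub_sub_sub_cancel_left, norm_sub_rev]
    exact norm_sub_padicFract_le_one _
  have hscale : ‖a‖ ^ (-(1 : ℝ) / 2) = (p : ℝ) ^ (-((-a.valuation : ℤ) : ℝ) / 2) := by
    rw [Padic.norm_rpow_eq_rpow_neg_valuation ha]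
    push_cast
    ring_nf
  rw [padicPsiTransDil, padicPsi, padicWavelet, neg_neg, hscale]
  by_cases hx : ‖(x - b) / a‖ ≤ 1
  · rw [if_pos hx, if_pos (hsupp.mp hx), padicChar_inv_mul_div_eq ha hj hx,
      ← sub_add_sub_cancel x ((p : ℚ_[p]) ^ a.valuation * n) b, mul_add, padicChar_add]
    ring
  · rw [if_neg hx, if_neg (mt hsupp.mpr hx), mul_zero, mul_zero]
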